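/- arXiv:math/9303204 — 6 statements merged into one kernel-verified Lean document; each statement's English description precedes it below -/
import Mathlib

section
/- Let X be a Banach space, M a subspace of X*, and T: X → Y a surjective bounded operator with Y a Banach space. If T is strictly singular and M = T*(Y*), then M is nowhere norming: for every infinite-dimensional closed subspace L of X and every c > 0, there exists x in L with sup_{f ∈ M, ‖f‖ ≤ 1} |f(x)| < c‖x‖. -/
open NormedSpace Metric ZeroAtInfty Filter Topology

noncomputable def dualSup {X : Type*} [NormedAddCommGroup X] [NormedSpace ℝ X]
    (M : Submodule ℝ (StrongDual ℝ X)) (x : X) : ℝ :=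
  sSup {r : ℝ | ∃ f ∈ M, ‖f‖ ≤ 1 ∧ r = |f x|}

def IsTotalSub {X : Type*} [NormedAddCommGroup X] [NormedSpace ℝ X]
    (M : Submodule ℝ (StrongDual ℝ X)) : Prop :=
  ∀ x : X, x ≠ 0 → ∃ f ∈ M, f x ≠ 0

def IsNormingOver {X : Type*} [NormedAddCommGroup X] [NormedSpace ℝ X]
    (M : Submodule ℝ (StrongDual ℝ X)) (L : Submodule ℝ X) : Prop :=
  ∃ c > 0, ∀ x ∈ L, c * ‖x‖ ≤ dualSup M x

def IsNorming {X : Type*} [NormedAddCommGroup X] [NormedSpace ℝ X]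
    (M : Submodule ℝ (StrongDual ℝ X)) : Prop :=
  ∃ c > 0, ∀ x : X, c * ‖x‖ ≤ dualSup M x

def NowhereNorming {X : Type*} [NormedAddCommGroup X] [NormedSpace ℝ X]
    (M : Submodule ℝ (StrongDual ℝ X)) : Prop :=
  ∀ L : Submodule ℝ X, IsClosed (L : Set X) → ¬FiniteDimensional ℝ L →
    ∀ c > 0, ∃ x ∈ L, dualSup M x < c * ‖x‖

def StrictlySingular {X Y : Type*} [NormedAddCommGroup X] [NormedSpace ℝ X]
    [NormedAddCommGroup Y] [NormedSpace ℝ Y] (T : X →L[ℝ] Y) : Prop :=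
  ∀ L : Submodule ℝ X, IsClosed (L : Set X) → ¬FiniteDimensional ℝ L →
    ¬∃ c > 0, ∀ x ∈ L, c * ‖x‖ ≤ ‖T x‖

def Nonquasireflexive (X : Type*) [NormedAddCommGroup X] [NormedSpace ℝ X] : Prop :=
  ¬FiniteDimensional ℝ
    (StrongDual ℝ (StrongDual ℝ X) ⧸ LinearMap.range (inclusionInDoubleDual ℝ X).toLinearMap)

/-! By the open mapping theorem a surjection `T : X → Y` of Banach spaces admits a constant `C`
with `‖g‖ ≤ C ‖g ∘ T‖` for every `g ∈ Y*`. Hence every `f = g ∘ T` in the unit ball of `M`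
satisfies `|f x| ≤ C ‖T x‖`, so the seminorm `dualSup M` is dominated by `C ‖T ·‖`. If `M` were
norming over an infinite-dimensional closed subspace `L`, then `T` would be bounded below on `L`,
contradicting strict singularity. -/

theorem ContinuousLinearMap.opNorm_le_mul_opNorm_comp {𝕜 E F G : Type*}
    [NontriviallyNormedField 𝕜] [NormedAddCommGroup E] [NormedSpace 𝕜 E]
    [SeminormedAddCommGroup F] [NormedSpace 𝕜 F] [SeminormedAddCommGroup G] [NormedSpace 𝕜 G]
    {T : E →L[𝕜] F} {C : ℝ} (hC : 0 ≤ C) (hT : ∀ y, ∃ x, T x = y ∧ ‖x‖ ≤ C * ‖y‖)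
    (g : F →L[𝕜] G) : ‖g‖ ≤ C * ‖g.comp T‖ := by
  refine g.opNorm_le_bound (by positivity) fun y => ?_
  obtain ⟨x, rfl, hx⟩ := hT y
  calc ‖g (T x)‖ = ‖g.comp T x‖ := rfl
    _ ≤ ‖g.comp T‖ * ‖x‖ := (g.comp T).le_opNorm x
    _ ≤ ‖g.comp T‖ * (C * ‖T x‖) := by gcongr
    _ = C * ‖g.comp T‖ * ‖T x‖ := by ring

section

variable {X Y : Type*} [NormedAddCommGroup X] [NormedSpace ℝ X]
  [NormedAddCommGroup Y] [NormedSpace ℝ Y] {T : X →L[ℝ] Y} {M : Submodule ℝ (StrongDual ℝ X)}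

theorem dualSup_le_mul_norm_apply {C : ℝ} (hC : 0 ≤ C)
    (hT : ∀ y, ∃ x, T x = y ∧ ‖x‖ ≤ C * ‖y‖)
    (hM : ∀ f ∈ M, ∃ g : StrongDual ℝ Y, f = g.comp T) (x : X) :
    dualSup M x ≤ C * ‖T x‖ := by
  refine Real.sSup_le ?_ (by positivity)
  rintro _ ⟨f, hfM, hf, rfl⟩
  obtain ⟨g, rfl⟩ := hM f hfM
  calc |g.comp T x| = ‖g (T x)‖ := rfl
    _ ≤ ‖g‖ * ‖T x‖ := g.le_opNorm _
    _ ≤ C * ‖g.comp T‖ * ‖T x‖ := by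
      gcongr; exact ContinuousLinearMap.opNorm_le_mul_opNorm_comp hC hT g
    _ ≤ C * 1 * ‖T x‖ := by gcongr
    _ = C * ‖T x‖ := by ring

theorem StrictlySingular.nowhereNorming_of_dualSup_le (hT : StrictlySingular T) {C : ℝ}
    (hC : 0 < C) (hM : ∀ x, dualSup M x ≤ C * ‖T x‖) : NowhereNorming M := by
  intro L hL hLinf c hc
  by_contra! hnorming
  refine hT L hL hLinf ⟨c / C, div_pos hc hC, fun x hx => ?_⟩
  rw [div_mul_eq_mul_div, div_le_iff₀ hC]
  calc c * ‖x‖ ≤ dualSup M x := hnorming x hx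
    _ ≤ C * ‖T x‖ := hM x
    _ = ‖T x‖ * C := mul_comm _ _

end

theorem stmt0 {X Y : Type*} [NormedAddCommGroup X] [NormedSpace ℝ X] [CompleteSpace X]
    [NormedAddCommGroup Y] [NormedSpace ℝ Y] [CompleteSpace Y]
    (T : X →L[ℝ] Y) (hsurj : Function.Surjective T) (hss : StrictlySingular T)
    (M : Submodule ℝ (StrongDual ℝ X)) (hM : ∀ f, f ∈ M ↔ ∃ g : StrongDual ℝ Y, f = g.comp T) :
    NowhereNorming M := by
  obtain ⟨C, hC, hT⟩ := T.exists_preimage_norm_le hsurj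
  exact hss.nowhereNorming_of_dualSup_le hC
    (dualSup_le_mul_norm_apply hC.le hT fun f hf => (hM f).1 hf)
end

section
/- Under the hypotheses of the previous construction, with M₁ = T*(Y*) for a quotient map T: X → Y, and Q as above with u_n* = T*(y_n*) for a weak* null sequence {y_n*} ⊆ Y*, the subspace M = Q(M₁) is total over X: for every nonzero x ∈ X there exists f ∈ M with f(x) ≠ 0. -/
/-!
If `Q (T* g)` vanishes at `x` for every `g`, then for `n ∈ I k` biorthogonality reduces
`Q u_n = u_n + (4^k ‖v_k‖)⁻¹ s_k`, so `y_n (T x) = u_n x` is the same constant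
`-(4^k ‖v_k‖)⁻¹ s_k x` along the infinite set `I k`. As `y_n` is weak* null this constant
is `0`, so every `s_k` vanishes at `x`, and totality of the `s_k` forces `x = 0`.
-/

open NormedSpace Metric ZeroAtInfty Filter Topology

lemma perturbation_apply_of_mem {E : Type*} [NormedAddCommGroup E] [NormedSpace ℝ E]
    {s : ℕ → E} {v : ℕ → StrongDual ℝ E} {I : ℕ → Set ℕ} {u : ℕ → E} {Q : E → E}
    (hIdisj : Pairwise (Function.onFun Disjoint I))
    (hbio : ∀ k n, (n ∈ I k → v k (u n) = 1) ∧ (n ∉ I k → v k (u n) = 0))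
    (hQ : ∀ g, Q g = g + ∑' k, ((v k g) / ((4 : ℝ) ^ k * ‖v k‖)) • s k)
    {k n : ℕ} (hn : n ∈ I k) :
    Q (u n) = u n + ((4 : ℝ) ^ k * ‖v k‖)⁻¹ • s k := by
  rw [hQ, tsum_eq_single k fun j hj => ?_, (hbio k n).1 hn, one_div]
  rw [(hbio j n).2 fun hnj => Set.disjoint_left.mp (hIdisj hj) hnj hn, zero_div, zero_smul]

theorem stmt3_general {X Y : Type*} [NormedAddCommGroup X] [NormedSpace ℝ X]
    [NormedAddCommGroup Y] [NormedSpace ℝ Y]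
    (T : X →L[ℝ] Y)
    (y : ℕ → StrongDual ℝ Y)
    (hy : ∀ z : Y, Filter.Tendsto (fun n => y n z) Filter.atTop (nhds 0))
    (u : ℕ → StrongDual ℝ X) (hu : ∀ n, u n = (y n).comp T)
    (s : ℕ → StrongDual ℝ X)
    (hstotal : ∀ x : X, x ≠ 0 → ∃ k, s k x ≠ 0)
    (v : ℕ → StrongDual ℝ (StrongDual ℝ X)) (hvne : ∀ k, v k ≠ 0)
    (I : ℕ → Set ℕ) (hIdisj : Pairwise (Function.onFun Disjoint I))
    (hIinf : ∀ k, (I k).Infinite)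
    (hbio : ∀ k n, (n ∈ I k → v k (u n) = 1) ∧ (n ∉ I k → v k (u n) = 0))
    (Q : StrongDual ℝ X →L[ℝ] StrongDual ℝ X)
    (hQ : ∀ g : StrongDual ℝ X, Q g = g + ∑' k, ((v k g) / ((4 : ℝ) ^ k * ‖v k‖)) • s k) :
    ∀ x : X, x ≠ 0 → ∃ g : StrongDual ℝ Y, (Q (g.comp T)) x ≠ 0 := by
  intro x hx
  by_contra! hvanish
  obtain ⟨k, hk⟩ := hstotal x hx
  set c := ((4 : ℝ) ^ k * ‖v k‖)⁻¹ * s k x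
  have hconst : ∀ n ∈ I k, y n (T x) = -c := by
    intro n hn
    have h0 := hvanish (y n)
    rw [← hu n, perturbation_apply_of_mem hIdisj hbio hQ hn] at h0
    simp only [add_apply, smul_apply, smul_eq_mul,
      hu n, ContinuousLinearMap.comp_apply] at h0
    linarith
  have hc : 0 = -c :=
    tendsto_nhds_unique_of_frequently_eq (hy (T x)) (tendsto_const_nhds (x := -c))
      ((Nat.frequently_atTop_iff_infinite.mpr (hIinf k)).mono hconst)
  have hden : (4 : ℝ) ^ k * ‖v k‖ ≠ 0 :=
    mul_ne_zero (pow_ne_zero _ four_ne_zero) fun h => hvne k ((v k).opNorm_zero_iff.mp h)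
  exact hk ((mul_eq_zero.mp (neg_eq_zero.mp hc.symm)).resolve_left (inv_ne_zero hden))

theorem stmt3 {X Y : Type*} [NormedAddCommGroup X] [NormedSpace ℝ X] [CompleteSpace X]
    [NormedAddCommGroup Y] [NormedSpace ℝ Y] [CompleteSpace Y]
    (T : X →L[ℝ] Y) (hsurj : Function.Surjective T)
    (hball : T '' Metric.ball 0 1 = Metric.ball 0 1)
    (y : ℕ → StrongDual ℝ Y)
    (hy : ∀ z : Y, Filter.Tendsto (fun n => y n z) Filter.atTop (nhds 0))
    (u : ℕ → StrongDual ℝ X) (hu : ∀ n, u n = (y n).comp T)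
    (s : ℕ → StrongDual ℝ X) (hsn : ∀ k, ‖s k‖ = 1)
    (hstotal : ∀ x : X, x ≠ 0 → ∃ k, s k x ≠ 0)
    (v : ℕ → StrongDual ℝ (StrongDual ℝ X)) (Cv : ℝ) (hvb : ∀ k, ‖v k‖ ≤ Cv) (hvne : ∀ k, v k ≠ 0)
    (I : ℕ → Set ℕ) (hIdisj : Pairwise (Function.onFun Disjoint I))
    (hIunion : (⋃ k, I k) = Set.univ) (hIinf : ∀ k, (I k).Infinite)
    (hbio : ∀ k n, (n ∈ I k → v k (u n) = 1) ∧ (n ∉ I k → v k (u n) = 0))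
    (Q : StrongDual ℝ X →L[ℝ] StrongDual ℝ X)
    (hQ : ∀ g : StrongDual ℝ X, Q g = g + ∑' k, ((v k g) / ((4 : ℝ) ^ k * ‖v k‖)) • s k) :
    ∀ x : X, x ≠ 0 → ∃ g : StrongDual ℝ Y, (Q (g.comp T)) x ≠ 0 :=
  stmt3_general T y hy u hu s hstotal v hvne I hIdisj hIinf hbio Q hQ
end

section
/- If U and V are Banach spaces and P: U → V is a bounded operator whose image is not closed, then the norm closure of P(B(U)) in V has empty interior, where B(U) is the closed unit ball of U. -/
open NormedSpace Metric ZeroAtInfty Filter Topology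

/-!
If the closure of `P(B)` contains a ball `B(a, ε)`, subtracting two approximations shows that the
closure of `P(2B)` contains `B(0, ε)`, so by scaling every `y` is within `‖y‖ / 2` of the image of
a vector of norm `O(‖y‖)`. Correcting the residual again and again yields a geometrically
convergent series in the complete space `U` whose image is `y`: `P` is onto, and its range is
closed.
-/

namespace ContinuousLinearMap

variable {E F : Type*} [NormedAddCommGroup E] [NormedSpace ℝ E]
  [NormedAddCommGroup F] [NormedSpace ℝ F] (f : E →L[ℝ] F)

theorem ball_zero_subset_closure_image_closedBall_two {a : F} {ε : ℝ}
    (h : ball a ε ⊆ closure (f '' closedBall 0 1)) :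
    ball 0 ε ⊆ closure (f '' closedBall 0 2) := by
  intro y hy
  have hε : 0 < ε := pos_of_mem_ball hy
  have hay : a + y ∈ ball a ε := by simpa using hy
  have hsub : (a + y) - a ∈ closure (f '' closedBall 0 2) := by
    refine map_mem_closure₂ continuous_sub (h hay) (h (mem_ball_self hε)) ?_
    rintro _ ⟨x₁, hx₁, rfl⟩ _ ⟨x₂, hx₂, rfl⟩
    refine ⟨x₁ - x₂, ?_, map_sub f x₁ x₂⟩
    rw [mem_closedBall_zero_iff] at hx₁ hx₂ ⊢
    linarith [norm_sub_le x₁ x₂]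
  simpa using hsub

theorem exists_approx_preimage_of_ball_subset_closure_image {ε R : ℝ} (hε : 0 < ε)
    (h : ball 0 ε ⊆ closure (f '' closedBall 0 R)) :
    ∀ y, ∃ x, ‖y - f x‖ ≤ 1 / 2 * ‖y‖ ∧ ‖x‖ ≤ 2 * R / ε * ‖y‖ := by
  intro y
  rcases eq_or_ne y 0 with rfl | hy
  · exact ⟨0, by simp⟩
  have hy' : 0 < ‖y‖ := norm_pos_iff.2 hy
  set t : ℝ := ε / (2 * ‖y‖) with ht
  have htpos : 0 < t := by positivity
  have hty : ‖t • y‖ = ε / 2 := by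
    rw [norm_smul, Real.norm_of_nonneg htpos.le, ht]
    field_simp
  have hmem : t • y ∈ closure (f '' closedBall 0 R) := h (by rw [mem_ball_zero_iff, hty]; linarith)
  obtain ⟨_, ⟨x, hx, rfl⟩, hxy⟩ := Metric.mem_closure_iff.1 hmem (ε / 4) (by positivity)
  rw [mem_closedBall_zero_iff] at hx
  refine ⟨t⁻¹ • x, ?_, ?_⟩
  · have : y - f (t⁻¹ • x) = t⁻¹ • (t • y - f x) := by
      rw [map_smul, smul_sub, inv_smul_smul₀ htpos.ne']
    rw [this, norm_smul, Real.norm_of_nonneg (inv_nonneg.2 htpos.le), ← dist_eq_norm]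
    calc t⁻¹ * dist (t • y) (f x) ≤ t⁻¹ * (ε / 4) := by gcongr
      _ = 1 / 2 * ‖y‖ := by rw [ht]; field_simp; ring
  · calc ‖t⁻¹ • x‖ = t⁻¹ * ‖x‖ := by rw [norm_smul, Real.norm_of_nonneg (inv_nonneg.2 htpos.le)]
      _ ≤ t⁻¹ * R := by gcongr
      _ = 2 * R / ε * ‖y‖ := by rw [ht]; field_simp

theorem surjective_of_exists_approx_preimage [CompleteSpace E] {C : ℝ}
    (hf : ∀ y, ∃ x, ‖y - f x‖ ≤ 1 / 2 * ‖y‖ ∧ ‖x‖ ≤ C * ‖y‖) :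
    Function.Surjective f := by
  choose g hg using hf
  intro y
  -- `r^[n] y` is the part of `y` not yet reached after `n` corrections.
  set r : F → F := fun z ↦ z - f (g z)
  have hr : ∀ n, ‖r^[n] y‖ ≤ (1 / 2) ^ n * ‖y‖ := by
    intro n
    induction n with
    | zero => simp
    | succ n ih =>
      rw [Function.iterate_succ_apply', pow_succ', mul_assoc]
      exact (hg _).1.trans (by gcongr)
  set u : ℕ → E := fun n ↦ g (r^[n] y)
  have hu : Summable u := by
    refine .of_norm_bounded (summable_geometric_two.mul_left (|C| * ‖y‖)) fun n ↦ ?_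
    calc ‖u n‖ ≤ C * ‖r^[n] y‖ := (hg _).2
      _ ≤ |C| * ((1 / 2) ^ n * ‖y‖) := by gcongr; exacts [le_abs_self C, hr n]
      _ = |C| * ‖y‖ * (1 / 2) ^ n := by ring
  have htele : ∀ n, ∑ i ∈ Finset.range n, f (u i) = y - r^[n] y := fun n ↦ by
    have : ∀ i, f (u i) = r^[i] y - r^[i + 1] y := fun i ↦ by
      simp only [u, r, Function.iterate_succ_apply', sub_sub_cancel]
    simp only [this, Finset.sum_range_sub', Function.iterate_zero_apply]
  have hres : Tendsto (fun n ↦ r^[n] y) atTop (𝓝 0) := by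
    refine squeeze_zero_norm hr ?_
    simpa using (tendsto_pow_atTop_nhds_zero_of_lt_one (by norm_num) one_half_lt_one).mul_const ‖y‖
  have hlim := (f.hasSum hu.hasSum).tendsto_sum_nat
  simp only [htele] at hlim
  refine ⟨∑' n, u n, tendsto_nhds_unique hlim ?_⟩
  simpa using tendsto_const_nhds.sub hres

end ContinuousLinearMap

theorem stmt9_general {U V : Type*} [NormedAddCommGroup U] [NormedSpace ℝ U] [CompleteSpace U]
    [NormedAddCommGroup V] [NormedSpace ℝ V]
    (P : U →L[ℝ] V) (h : ¬IsClosed (Set.range P)) :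
    interior (closure (P '' Metric.closedBall 0 1)) = ∅ := by
  refine Set.eq_empty_of_forall_notMem fun a ha ↦ h ?_
  obtain ⟨ε, hε, hball⟩ := Metric.isOpen_iff.1 isOpen_interior a ha
  have hsurj : Function.Surjective P :=
    P.surjective_of_exists_approx_preimage <|
      P.exists_approx_preimage_of_ball_subset_closure_image hε <|
        P.ball_zero_subset_closure_image_closedBall_two (hball.trans interior_subset)
  rw [Set.range_eq_univ.2 hsurj]
  exact isClosed_univ

theorem stmt9 {U V : Type*} [NormedAddCommGroup U] [NormedSpace ℝ U] [CompleteSpace U]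
    [NormedAddCommGroup V] [NormedSpace ℝ V] [CompleteSpace V]
    (P : U →L[ℝ] V) (h : ¬IsClosed (Set.range P)) :
    interior (closure (P '' Metric.closedBall 0 1)) = ∅ :=
  stmt9_general P h
end

section
/- Let P: U → V be a bounded operator between Banach spaces with nonclosed image, and let ε > 0. Then there exist a functional f ∈ V* and a bounded operator P₁: U → V such that f does not vanish identically on the range of P, the range of P − P₁ is at most one-dimensional, ‖P − P₁‖ ≤ ε, and the range of P₁ is contained in ker f ∩ cl(range P). -/
open NormedSpace Metric ZeroAtInfty Filter Topology

/-! If every vector of `range P` of norm at most `ε` lay in `C = closure (P '' closedBall 0 1)`,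
then `C` would contain a ball of the Banach space `closure (range P)`, and the successive
approximation argument of the open mapping theorem would make `P` onto its closure. Hence some
`P u₀` with `‖P u₀‖ ≤ ε` lies outside `C`, and Hahn–Banach separates it from the absolutely convex
set `C` by a functional `f` with `f (P u₀) = 1` and `‖f ∘ P‖ ≤ 1`. The rank-one perturbation
`P₁ = P - (f ∘ P) • P u₀` then works. -/

section

variable {E F : Type*} [NormedAddCommGroup E] [NormedSpace ℝ E]
  [NormedAddCommGroup F] [NormedSpace ℝ F]

theorem ContinuousLinearMap.surjective_of_exists_approx_preimage_s11 [CompleteSpace E]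
    (T : E →L[ℝ] F) (C : ℝ)
    (happrox : ∀ y, ∃ x, ‖y - T x‖ ≤ ‖y‖ / 2 ∧ ‖x‖ ≤ C * ‖y‖) :
    Function.Surjective T := by
  choose g hg_approx hg_norm using happrox
  intro y
  -- `r n` is the residual left after `n` correction steps
  set r : ℕ → F := fun n => (fun z => z - T (g z))^[n] y
  have hr_succ (n : ℕ) : r (n + 1) = r n - T (g (r n)) := Function.iterate_succ_apply' _ _ _
  have hr_norm (n : ℕ) : ‖r n‖ ≤ (1 / 2) ^ n * ‖y‖ := by
    induction n with
    | zero => simp [r]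
    | succ n ih =>
      rw [hr_succ, pow_succ]
      linarith [hg_approx (r n)]
  have hgeom : Tendsto (fun n : ℕ => (1 / 2 : ℝ) ^ n * ‖y‖) atTop (𝓝 0) := by
    simpa using (tendsto_pow_atTop_nhds_zero_of_lt_one (by norm_num : (0 : ℝ) ≤ 1 / 2)
      (by norm_num)).mul_const ‖y‖
  have hsum : Summable fun n => g (r n) :=
    Summable.of_norm_bounded ((summable_geometric_two.mul_right ‖y‖).mul_left |C|)
      fun n => (hg_norm _).trans <| by grw [le_abs_self C, hr_norm n]
  refine ⟨∑' n, g (r n), tendsto_nhds_unique (hsum.hasSum.mapL T).tendsto_sum_nat ?_⟩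
  have hpartial (n : ℕ) : ∑ i ∈ Finset.range n, T (g (r i)) = y - r n := by
    have hstep (i : ℕ) : T (g (r i)) = r i - r (i + 1) := by rw [hr_succ]; abel
    simp_rw [hstep, Finset.sum_range_sub']
    rfl
  simpa [hpartial] using tendsto_const_nhds.sub (squeeze_zero_norm hr_norm hgeom)

theorem ContinuousLinearMap.exists_approx_preimage_of_ball_subset_closure_image_s11
    (T : E →L[ℝ] F) {r : ℝ} (hr : 0 < r)
    (hball : ∀ y ∈ closure (Set.range T), ‖y‖ < r → y ∈ closure (T '' closedBall 0 1))
    {y : F} (hy : y ∈ closure (Set.range T)) :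
    ∃ x, ‖y - T x‖ ≤ ‖y‖ / 2 ∧ ‖x‖ ≤ 2 / r * ‖y‖ := by
  rcases eq_or_ne y 0 with rfl | hy0
  · exact ⟨0, by simp⟩
  have hy_pos : 0 < ‖y‖ := norm_pos_iff.mpr hy0
  set s := r / (2 * ‖y‖) with hs
  have hs_pos : 0 < s := by positivity
  have hsy : s • y ∈ closure (T '' closedBall 0 1) := by
    refine hball _ (map_mem_closure (continuous_const_smul s) hy ?_) ?_
    · rintro _ ⟨x, rfl⟩
      exact ⟨s • x, map_smul T s x⟩
    · rw [norm_smul, Real.norm_of_nonneg hs_pos.le, hs]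
      field_simp
      linarith
  obtain ⟨_, ⟨x, hx, rfl⟩, hxy⟩ := Metric.mem_closure_iff.mp hsy (s * (‖y‖ / 2)) (by positivity)
  refine ⟨s⁻¹ • x, ?_, ?_⟩
  · have : y - T (s⁻¹ • x) = s⁻¹ • (s • y - T x) := by
      rw [smul_sub, smul_smul, inv_mul_cancel₀ hs_pos.ne', one_smul, map_smul]
    rw [this, norm_smul, Real.norm_of_nonneg (inv_nonneg.mpr hs_pos.le), ← dist_eq_norm,
      inv_mul_le_iff₀ hs_pos]
    exact hxy.le
  · rw [norm_smul, Real.norm_of_nonneg (inv_nonneg.mpr hs_pos.le), hs]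
    rw [mem_closedBall_zero_iff] at hx
    calc (r / (2 * ‖y‖))⁻¹ * ‖x‖ ≤ (r / (2 * ‖y‖))⁻¹ * 1 := by gcongr
      _ = 2 / r * ‖y‖ := by field_simp

theorem ContinuousLinearMap.isClosed_range_of_small_mem_closure_image_closedBall
    [CompleteSpace E] [CompleteSpace F] (T : E →L[ℝ] F) {r : ℝ} (hr : 0 < r)
    (hsmall : ∀ x, ‖T x‖ ≤ r → T x ∈ closure (T '' closedBall 0 1)) :
    IsClosed (Set.range T) := by
  have hball : ∀ y ∈ closure (Set.range T), ‖y‖ < r → y ∈ closure (T '' closedBall 0 1) := by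
    intro y hy hyr
    have : ball 0 r ∩ Set.range T ⊆ closure (T '' closedBall 0 1) := by
      rintro _ ⟨hxr, x, rfl⟩
      exact hsmall x (mem_ball_zero_iff.mp hxr).le
    exact closure_minimal this isClosed_closure
      (isOpen_ball.inter_closure ⟨mem_ball_zero_iff.mpr hyr, hy⟩)
  set W := (LinearMap.range T.toLinearMap).topologicalClosure
  have hW (y : F) : y ∈ W ↔ y ∈ closure (Set.range T) := by
    rw [← SetLike.mem_coe, Submodule.topologicalClosure_coe, LinearMap.coe_range,
      ContinuousLinearMap.coe_coe]
  have : CompleteSpace W := (Submodule.isClosed_topologicalClosure _).completeSpace_coe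
  set T' : E →L[ℝ] W := T.codRestrict W fun x => (hW _).mpr (subset_closure ⟨x, rfl⟩)
  have hT'_surj : Function.Surjective T' := by
    refine T'.surjective_of_exists_approx_preimage_s11 (2 / r) fun y => ?_
    exact_mod_cast T.exists_approx_preimage_of_ball_subset_closure_image_s11 hr hball ((hW _).mp y.2)
  refine isClosed_of_closure_subset fun y hy => ?_
  obtain ⟨x, hx⟩ := hT'_surj ⟨y, (hW y).mpr hy⟩
  exact ⟨x, congrArg Subtype.val hx⟩

theorem ContinuousLinearMap.exists_dual_eq_one_of_notMem_closure_image_closedBall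
    (T : E →L[ℝ] F) {y : F} (hy : y ∉ closure (T '' closedBall 0 1)) :
    ∃ g : StrongDual ℝ F, g y = 1 ∧ ‖g.comp T‖ ≤ 1 := by
  have hconv : Convex ℝ (closure (T '' closedBall (0 : E) 1)) :=
    ((convex_closedBall 0 1).linear_image T.toLinearMap).closure
  obtain ⟨f, s, hf_lt, hs_lt⟩ := geometric_hahn_banach_closed_point hconv isClosed_closure hy
  have hs_pos : 0 < s := by
    simpa using hf_lt 0 (subset_closure ⟨0, mem_closedBall_self zero_le_one, map_zero T⟩)
  have hfy_pos : 0 < f y := hs_pos.trans hs_lt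
  refine ⟨(f y)⁻¹ • f, by simp [hfy_pos.ne'], opNorm_le_of_unit_norm zero_le_one fun x hx => ?_⟩
  have hlt (z : E) (hz : ‖z‖ = 1) : (f y)⁻¹ * f (T z) < 1 := by
    rw [inv_mul_lt_iff₀ hfy_pos, mul_one]
    exact (hf_lt _ (subset_closure ⟨z, mem_closedBall_zero_iff.mpr hz.le, rfl⟩)).trans hs_lt
  have := hlt x hx
  have := hlt (-x) (by rw [norm_neg, hx])
  simp only [map_neg, mul_neg] at this
  simp only [comp_apply, smul_apply, smul_eq_mul, Real.norm_eq_abs, abs_le]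
  constructor <;> linarith

end

theorem stmt11 {U V : Type*} [NormedAddCommGroup U] [NormedSpace ℝ U] [CompleteSpace U]
    [NormedAddCommGroup V] [NormedSpace ℝ V] [CompleteSpace V]
    (P : U →L[ℝ] V) (h : ¬IsClosed (Set.range P)) (ε : ℝ) (hε : 0 < ε) :
    ∃ (f : StrongDual ℝ V) (P₁ : U →L[ℝ] V),
      (∃ u : U, f (P u) ≠ 0) ∧
      (∃ v : V, ∀ u : U, (P - P₁) u ∈ Submodule.span ℝ {v}) ∧
      ‖P - P₁‖ ≤ ε ∧
      ∀ u : U, f (P₁ u) = 0 ∧ P₁ u ∈ closure (Set.range P) := by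
  obtain ⟨u₀, hu₀_small, hu₀_far⟩ :
      ∃ u₀, ‖P u₀‖ ≤ ε ∧ P u₀ ∉ closure (P '' closedBall 0 1) := by
    by_contra! hsmall
    exact h (P.isClosed_range_of_small_mem_closure_image_closedBall hε hsmall)
  obtain ⟨f, hf_one, hfP⟩ := P.exists_dual_eq_one_of_notMem_closure_image_closedBall hu₀_far
  set Q : U →L[ℝ] V := (f.comp P).smulRight (P u₀)
  refine ⟨f, P - Q, ⟨u₀, by simp [hf_one]⟩, ⟨P u₀, fun u => ?_⟩, ?_, fun u => ⟨?_, ?_⟩⟩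
  · simpa [Q] using Submodule.smul_mem _ (f (P u)) (Submodule.mem_span_singleton_self (P u₀))
  · rw [sub_sub_cancel, ContinuousLinearMap.norm_smulRight_apply]
    calc ‖f.comp P‖ * ‖P u₀‖ ≤ 1 * ε := by gcongr
      _ = ε := one_mul ε
  · simp [Q, hf_one]
  · exact subset_closure ⟨u - f (P u) • u₀, by simp [Q]⟩
end

section
/- Let M* contain a closed norming subspace V of infinite codimension, let {z_i} be a normalized basic sequence in M*/V with lifts m_i* ∈ M*, ‖m_i*‖ ≤ 2, and let X = V ⊕ ℓ¹. Define H: X → M* by H(v, (a_i)) = v + Σ_i (a_i/i) m_i*. Then H is injective, bounded, but not an isomorphic embedding, and H*(M) ⊆ X* is a total nonnorming subspace of X*. -/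
/-!
If `H (v, a) = 0`, projecting to `M* / V` kills `v` and leaves a series `∑ (aᵢ / (i + 1)) zᵢ`
summing to `0`; the basis constant forces all its partial sums, hence all coefficients, to vanish,
so `H` is injective. It is not bounded below because `H (0, eₙ) = m'ₙ / (n + 1) → 0`.
Since `H` is the identity on `V` and `V` is `c`-norming over `M`, the adjoint satisfies
`c ‖m‖ ≤ ‖H* m‖` on `M`; if `H*(M)` were `c'`-norming, this would give `c c' ‖x‖ ≤ ‖H x‖`.
Totality of `H*(M)` is injectivity of `H` read through the duality pairing.
-/

open NormedSpace Metric ZeroAtInfty Filter Topology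

def IsBasicSeq {E : Type*} [SeminormedAddCommGroup E] [NormedSpace ℝ E] (z : ℕ → E) : Prop :=
  (∀ i, z i ≠ 0) ∧ ∃ K > 0, ∀ n m : ℕ, n ≤ m → ∀ a : ℕ → ℝ,
    ‖∑ i ∈ Finset.range n, a i • z i‖ ≤ K * ‖∑ i ∈ Finset.range m, a i • z i‖

theorem IsBasicSeq.coeff_eq_zero_of_hasSum_zero {E : Type*} [SeminormedAddCommGroup E]
    [NormedSpace ℝ E] {z : ℕ → E} (hz : IsBasicSeq z) (hz0 : ∀ i, ‖z i‖ ≠ 0) {a : ℕ → ℝ}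
    (ha : HasSum (fun i => a i • z i) 0) (n : ℕ) : a n = 0 := by
  obtain ⟨-, K, -, hK⟩ := hz
  set S : ℕ → E := fun k => ∑ i ∈ Finset.range k, a i • z i
  have hS : ∀ k, ‖S k‖ = 0 := by
    intro k
    have hlim : Tendsto (fun m => K * ‖S m‖) atTop (𝓝 0) := by
      simpa using ha.tendsto_sum_nat.norm.const_mul K
    refine le_antisymm (ge_of_tendsto hlim ?_) (norm_nonneg _)
    filter_upwards [eventually_ge_atTop k] with m hm
    exact hK k m hm a
  have hterm : ‖a n • z n‖ = 0 := by
    have : a n • z n = S (n + 1) - S n := by simp [S, Finset.sum_range_succ]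
    refine le_antisymm ?_ (norm_nonneg _)
    calc ‖a n • z n‖ ≤ ‖S (n + 1)‖ + ‖S n‖ := this ▸ norm_sub_le _ _
      _ = 0 := by rw [hS, hS, add_zero]
  rw [norm_smul] at hterm
  simpa using (mul_eq_zero.mp hterm).resolve_right (hz0 n)

theorem summable_div_succ_smul {E : Type*} [NormedAddCommGroup E] [NormedSpace ℝ E]
    [CompleteSpace E] (a : lp (fun _ : ℕ => ℝ) 1) {x : ℕ → E} {C : ℝ} (hx : ∀ i, ‖x i‖ ≤ C) :
    Summable fun i : ℕ => (a i / ((i : ℝ) + 1)) • x i := by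
  have ha : Summable fun i => ‖a i‖ := by
    simpa using (lp.memℓp a).summable (by norm_num : (0 : ℝ) < (1 : ENNReal).toReal)
  refine Summable.of_norm ((ha.mul_right C).of_nonneg_of_le (fun _ => norm_nonneg _) fun i => ?_)
  rw [norm_smul, norm_div, Real.norm_of_nonneg (by positivity : (0 : ℝ) ≤ (i : ℝ) + 1)]
  exact mul_le_mul (div_le_self (norm_nonneg _) (by simp)) (hx i) (norm_nonneg _) (norm_nonneg _)

theorem isTotalSub_range_flip {X M : Type*} [NormedAddCommGroup X] [NormedSpace ℝ X]
    [NormedAddCommGroup M] [NormedSpace ℝ M] {H : X →L[ℝ] StrongDual ℝ M}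
    (hH : Function.Injective H) : IsTotalSub (LinearMap.range H.flip.toLinearMap) := by
  intro x hx
  obtain ⟨m, hm⟩ : ∃ m, H x m ≠ 0 := by
    by_contra! h
    exact hx (hH (by ext m; simpa using h m))
  exact ⟨H.flip m, LinearMap.mem_range_self _ m, hm⟩

theorem dualSup_le_norm_flip {X M : Type*} [NormedAddCommGroup X] [NormedSpace ℝ X]
    [NormedAddCommGroup M] [NormedSpace ℝ M] {V : Submodule ℝ (StrongDual ℝ M)}
    {H : X →L[ℝ] StrongDual ℝ M} {j : V → X} (hj : ∀ v, ‖j v‖ ≤ ‖v‖) (hHj : ∀ v, H (j v) = v)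
    (m : M) : dualSup V m ≤ ‖H.flip m‖ := by
  refine Real.sSup_le ?_ (norm_nonneg _)
  rintro r ⟨f, hfV, hf1, rfl⟩
  calc |f m| = ‖H.flip m (j ⟨f, hfV⟩)‖ := by simp [hHj]
    _ ≤ ‖H.flip m‖ * 1 := (H.flip m).le_of_opNorm_le_of_le le_rfl ((hj _).trans hf1)
    _ = ‖H.flip m‖ := mul_one _

theorem exists_bound_below_of_isNorming_range_flip {X M : Type*} [NormedAddCommGroup X]
    [NormedSpace ℝ X] [NormedAddCommGroup M] [NormedSpace ℝ M] {V : Submodule ℝ (StrongDual ℝ M)}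
    {H : X →L[ℝ] StrongDual ℝ M} {c : ℝ} (hc : 0 < c) (hVn : ∀ m : M, c * ‖m‖ ≤ dualSup V m)
    {j : V → X} (hj : ∀ v, ‖j v‖ ≤ ‖v‖) (hHj : ∀ v, H (j v) = v)
    (hn : IsNorming (LinearMap.range H.flip.toLinearMap)) :
    ∃ c' > 0, ∀ x, c' * ‖x‖ ≤ ‖H x‖ := by
  obtain ⟨c', hc', hn⟩ := hn
  have hflip (m : M) : c * ‖m‖ ≤ ‖H.flip m‖ := (hVn m).trans (dualSup_le_norm_flip hj hHj m)
  refine ⟨c * c', by positivity, fun x => ?_⟩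
  have hsup : dualSup (LinearMap.range H.flip.toLinearMap) x ≤ ‖H x‖ / c := by
    refine Real.sSup_le ?_ (by positivity)
    rintro r ⟨f, hf, hf1, rfl⟩
    obtain ⟨m, rfl⟩ := LinearMap.mem_range.mp hf
    have hm : ‖m‖ ≤ 1 / c := by
      rw [le_div_iff₀ hc]
      linarith [hflip m, show ‖H.flip m‖ ≤ 1 from hf1]
    calc |H.flip m x| = ‖H x m‖ := rfl
      _ ≤ ‖H x‖ * (1 / c) := (H x).le_of_opNorm_le_of_le le_rfl hm
      _ = ‖H x‖ / c := by ring
  calc c * c' * ‖x‖ ≤ c * (‖H x‖ / c) := by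
        rw [mul_assoc]; exact mul_le_mul_of_nonneg_left ((hn x).trans hsup) hc.le
    _ = ‖H x‖ := by field_simp

local notation "ℓ¹" => lp (fun _ : ℕ => ℝ) 1

def IsWeightedSeriesMap {M : Type*} [NormedAddCommGroup M] [NormedSpace ℝ M]
    {V : Submodule ℝ (StrongDual ℝ M)} (H : (↥V × ℓ¹) →L[ℝ] StrongDual ℝ M)
    (m' : ℕ → StrongDual ℝ M) : Prop :=
  ∀ p : ↥V × ℓ¹, H p = (p.1 : StrongDual ℝ M) + ∑' i : ℕ, ((p.2 i) / ((i : ℝ) + 1)) • m' i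

namespace IsWeightedSeriesMap

variable {M : Type*} [NormedAddCommGroup M] [NormedSpace ℝ M] {V : Submodule ℝ (StrongDual ℝ M)}
  {H : (↥V × ℓ¹) →L[ℝ] StrongDual ℝ M} {m' : ℕ → StrongDual ℝ M}

theorem apply_inl (hH : IsWeightedSeriesMap H m') (v : V) : H (v, 0) = v := by
  rw [hH]
  simp

theorem apply_single (hH : IsWeightedSeriesMap H m') (n : ℕ) :
    H (0, lp.single 1 n (1 : ℝ)) = ((n : ℝ) + 1)⁻¹ • m' n := by
  rw [hH, tsum_eq_single n fun j hj => by simp [hj]]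
  simp

theorem injective (hH : IsWeightedSeriesMap H m') {z : ℕ → StrongDual ℝ M ⧸ V}
    (hz : IsBasicSeq z) (hz0 : ∀ i, ‖z i‖ ≠ 0) {C : ℝ} (hm : ∀ i, ‖m' i‖ ≤ C)
    (hmz : ∀ i, V.mkQ (m' i) = z i) : Function.Injective H := by
  suffices h0 : ∀ p, H p = 0 → p = 0 from
    fun p q h => sub_eq_zero.mp (h0 _ (by rw [map_sub, h, sub_self]))
  rintro ⟨v, a⟩ hp
  have hsum : HasSum (fun i => (a i / ((i : ℝ) + 1)) • m' i) (-v) := by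
    rw [hH, add_eq_zero_iff_neg_eq] at hp
    exact hp ▸ (summable_div_succ_smul a hm).hasSum
  have hq : HasSum (fun i => (a i / ((i : ℝ) + 1)) • z i) 0 := by
    simpa [Function.comp_def, ← hmz, (Submodule.Quotient.mk_eq_zero V).2 v.2] using
      hsum.map V.mkQL V.mkQL.continuous
  have ha : a = 0 := by
    ext i
    exact (div_eq_zero_iff.mp (hz.coeff_eq_zero_of_hasSum_zero hz0 hq i)).resolve_right
      (by positivity)
  subst ha
  simpa [Prod.ext_iff, hH.apply_inl] using hp

theorem not_exists_bound_below (hH : IsWeightedSeriesMap H m') {C : ℝ} (hm : ∀ i, ‖m' i‖ ≤ C) :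
    ¬∃ c > 0, ∀ p, c * ‖p‖ ≤ ‖H p‖ := by
  rintro ⟨c, hc, hbelow⟩
  obtain ⟨n, hn⟩ := exists_nat_gt (C / c)
  have hnorm : ‖((0 : V), (lp.single 1 n 1 : ℓ¹))‖ = 1 := by
    simp [Prod.norm_def, lp.norm_single (E := fun _ : ℕ => ℝ) (p := 1) zero_lt_one]
  have hle : ‖H (0, lp.single 1 n 1)‖ ≤ C / ((n : ℝ) + 1) := by
    rw [hH.apply_single, norm_smul, norm_inv, Real.norm_of_nonneg (by positivity), inv_mul_eq_div]
    exact div_le_div_of_nonneg_right (hm n) (by positivity)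
  have h := (hbelow _).trans hle
  rw [hnorm, mul_one, le_div_iff₀ (by positivity)] at h
  rw [div_lt_iff₀ hc] at hn
  linarith

end IsWeightedSeriesMap

theorem stmt15_general {M : Type*} [NormedAddCommGroup M] [NormedSpace ℝ M]
    (V : Submodule ℝ (StrongDual ℝ M))
    (c : ℝ) (hc : 0 < c) (hVn : ∀ m : M, c * ‖m‖ ≤ dualSup V m)
    (z : ℕ → StrongDual ℝ M ⧸ V) (hznorm : ∀ i, ‖z i‖ = 1) (hzbasic : IsBasicSeq z)
    (m' : ℕ → StrongDual ℝ M) (hm2 : ∀ i, ‖m' i‖ ≤ 2) (hmz : ∀ i, V.mkQ (m' i) = z i)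
    (H : (↥V × lp (fun _ : ℕ => ℝ) 1) →L[ℝ] StrongDual ℝ M)
    (hH : ∀ p : ↥V × lp (fun _ : ℕ => ℝ) 1,
      H p = (p.1 : StrongDual ℝ M) + ∑' i : ℕ, ((p.2 i) / ((i : ℝ) + 1)) • m' i) :
    Function.Injective H ∧
    (¬∃ c' > 0, ∀ p : ↥V × lp (fun _ : ℕ => ℝ) 1, c' * ‖p‖ ≤ ‖H p‖) ∧
    IsTotalSub (X := ↥V × lp (fun _ : ℕ => ℝ) 1) (LinearMap.range H.flip.toLinearMap) ∧ ¬IsNorming (X := ↥V × lp (fun _ : ℕ => ℝ) 1) (LinearMap.range H.flip.toLinearMap) := by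
  have hH' : IsWeightedSeriesMap H m' := hH
  have hinj : Function.Injective H :=
    hH'.injective hzbasic (fun i => by simp [hznorm]) hm2 hmz
  have hbelow := hH'.not_exists_bound_below hm2
  have hj (v : V) : ‖((v, 0) : ↥V × lp (fun _ : ℕ => ℝ) 1)‖ ≤ ‖v‖ := by simp [Prod.norm_def]
  exact ⟨hinj, hbelow, isTotalSub_range_flip hinj,
    fun hn => hbelow (exists_bound_below_of_isNorming_range_flip hc hVn hj hH'.apply_inl hn)⟩

theorem stmt15 {M : Type*} [NormedAddCommGroup M] [NormedSpace ℝ M] [CompleteSpace M]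
    (V : Submodule ℝ (StrongDual ℝ M)) (hVc : IsClosed (V : Set (StrongDual ℝ M)))
    (c : ℝ) (hc : 0 < c) (hVn : ∀ m : M, c * ‖m‖ ≤ dualSup V m)
    (hcodim : ¬FiniteDimensional ℝ (StrongDual ℝ M ⧸ V))
    (z : ℕ → StrongDual ℝ M ⧸ V) (hznorm : ∀ i, ‖z i‖ = 1) (hzbasic : IsBasicSeq z)
    (m' : ℕ → StrongDual ℝ M) (hm2 : ∀ i, ‖m' i‖ ≤ 2) (hmz : ∀ i, V.mkQ (m' i) = z i)
    (H : (↥V × lp (fun _ : ℕ => ℝ) 1) →L[ℝ] StrongDual ℝ M)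
    (hH : ∀ p : ↥V × lp (fun _ : ℕ => ℝ) 1,
      H p = (p.1 : StrongDual ℝ M) + ∑' i : ℕ, ((p.2 i) / ((i : ℝ) + 1)) • m' i) :
    Function.Injective H ∧
    (¬∃ c' > 0, ∀ p : ↥V × lp (fun _ : ℕ => ℝ) 1, c' * ‖p‖ ≤ ‖H p‖) ∧
    IsTotalSub (X := ↥V × lp (fun _ : ℕ => ℝ) 1) (LinearMap.range H.flip.toLinearMap) ∧ ¬IsNorming (X := ↥V × lp (fun _ : ℕ => ℝ) 1) (LinearMap.range H.flip.toLinearMap) :=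
  stmt15_general V c hc hVn z hznorm hzbasic m' hm2 hmz H hH
end

section
/- Let Γ be a set with card(Γ) > 2^𝔠 and X = ℓ¹ ⊕ ℓ²(Γ). Then every total subspace M of X* is norming over some infinite-dimensional closed subspace of X; in particular X* contains no total nowhere norming subspace. -/
/-!
A total subspace `M` of `X*` separates the points of `X`, so `#X ≤ 𝔠 ^ #M`; as `#X ≥ #Γ > 2 ^ 𝔠`,
this forces `#M > 𝔠`. Restriction to `ℓ¹` maps `M` into `(ℓ¹)*`, which has only `𝔠` elements,
so its kernel — the functionals of `M` that only see the `ℓ²(Γ)` coordinate — is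
infinite-dimensional. By the Riesz representation these are `(a, b) ↦ ⟪g, b⟫` for `g` in an
infinite-dimensional subspace `N ⊆ ℓ²(Γ)`, and `M` is norming (with constant `1/2`) over the
closed subspace `0 × closure N`.
-/

open NormedSpace Metric ZeroAtInfty Filter Topology

open Cardinal

universe u

lemma IsTotalSub.cardinal_mk_le {X : Type*} [NormedAddCommGroup X] [NormedSpace ℝ X]
    {M : Submodule ℝ (StrongDual ℝ X)} (hM : IsTotalSub M) : #X ≤ 𝔠 ^ #M := by
  have hinj : Function.Injective fun (x : X) (f : M) => (f : StrongDual ℝ X) x := by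
    intro x y hxy
    by_contra hne
    obtain ⟨f, hfM, hf⟩ := hM (x - y) (sub_ne_zero.mpr hne)
    exact hf (by rw [map_sub]; exact sub_eq_zero.mpr (congrFun hxy ⟨f, hfM⟩))
  simpa [mk_arrow, mk_real] using mk_le_of_injective hinj

lemma IsTotalSub.continuum_lt_cardinal_mk {X : Type*} [NormedAddCommGroup X] [NormedSpace ℝ X]
    {M : Submodule ℝ (StrongDual ℝ X)} (hM : IsTotalSub M) (hX : 2 ^ 𝔠 < #X) : 𝔠 < #M := by
  by_contra! h
  refine (hX.trans_le hM.cardinal_mk_le).not_ge ?_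
  calc 𝔠 ^ #M ≤ 𝔠 ^ 𝔠 := power_le_power_left continuum_ne_zero h
    _ = 2 ^ 𝔠 := power_self_eq aleph0_le_continuum

lemma abs_apply_le_dualSup {X : Type*} [NormedAddCommGroup X] [NormedSpace ℝ X]
    {M : Submodule ℝ (StrongDual ℝ X)} {f : StrongDual ℝ X} (hfM : f ∈ M) (hf : ‖f‖ ≤ 1) (x : X) :
    |f x| ≤ dualSup M x := by
  refine le_csSup ⟨‖x‖, ?_⟩ ⟨f, hfM, hf, rfl⟩
  rintro _ ⟨g, -, hg, rfl⟩
  calc |g x| ≤ ‖g‖ * ‖x‖ := g.le_opNorm x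
    _ ≤ ‖x‖ := mul_le_of_le_one_left (norm_nonneg x) hg

lemma IsNormingOver.not_nowhereNorming {X : Type*} [NormedAddCommGroup X] [NormedSpace ℝ X]
    {M : Submodule ℝ (StrongDual ℝ X)} {L : Submodule ℝ X} (hM : IsNormingOver M L)
    (hL : IsClosed (L : Set X)) (hLfin : ¬FiniteDimensional ℝ L) : ¬NowhereNorming M := by
  intro hNN
  obtain ⟨c, hc, hnorm⟩ := hM
  obtain ⟨x, hxL, hlt⟩ := hNN L hL hLfin c hc
  exact (hnorm x hxL).not_gt hlt

lemma LinearMap.not_finiteDimensional_ker_of_continuum_lt {V W : Type u} [AddCommGroup V]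
    [Module ℝ V] [AddCommGroup W] [Module ℝ W] (f : V →ₗ[ℝ] W) (hV : 𝔠 < #V) (hW : #W ≤ 𝔠) :
    ¬FiniteDimensional ℝ (LinearMap.ker f) := by
  intro hker
  have hrank : Module.rank ℝ V = #V :=
    Module.Free.rank_eq_mk_of_infinite_lt ℝ V (by simpa [mk_real] using hV)
  have hrange : Module.rank ℝ (LinearMap.range f) ≤ 𝔠 :=
    (rank_le_card ℝ _).trans ((mk_le_of_injective Subtype.val_injective).trans hW)
  refine hV.not_ge ?_
  calc #V = Module.rank ℝ (LinearMap.range f) + Module.rank ℝ (LinearMap.ker f) := by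
        rw [f.rank_range_add_rank_ker, hrank]
    _ ≤ 𝔠 + ℵ₀ := add_le_add hrange (Module.rank_lt_aleph0 ℝ _).le
    _ = 𝔠 := continuum_add_aleph0

lemma lp.cardinal_mk_le (ι : Type*) (p : ENNReal) : #ι ≤ #(lp (fun _ : ι => ℝ) p) := by
  classical
  refine mk_le_of_injective (f := fun i => lp.single p i (1 : ℝ)) fun i j h => ?_
  by_contra hne
  simpa [Pi.single_apply, Ne.symm hne] using congrArg (fun f => f j) h

section lp

variable {ι : Type*} {p : ENNReal} [Fact (1 ≤ p)]

lemma lp.hasSum_apply_single [DecidableEq ι] (hp : p ≠ ⊤)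
    (g : StrongDual ℝ (lp (fun _ : ι => ℝ) p)) (f : lp (fun _ : ι => ℝ) p) :
    HasSum (fun i => f i * g (lp.single p i 1)) (g f) := by
  have hsingle : ∀ i, g (lp.single p i (f i)) = f i * g (lp.single p i 1) := fun i => by
    rw [← smul_eq_mul, ← map_smul, ← lp.single_smul, smul_eq_mul, mul_one]
  simpa only [hsingle] using g.hasSum (lp.hasSum_single hp f)

lemma lp.cardinal_mk_strongDual_le [Countable ι] (hp : p ≠ ⊤) :
    #(StrongDual ℝ (lp (fun _ : ι => ℝ) p)) ≤ 𝔠 := by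
  classical
  have hinj : Function.Injective
      fun (g : StrongDual ℝ (lp (fun _ : ι => ℝ) p)) (i : ι) => g (lp.single p i 1) := by
    intro g₁ g₂ h
    ext f
    have h' : ∀ i, g₁ (lp.single p i 1) = g₂ (lp.single p i 1) := congrFun h
    refine (lp.hasSum_apply_single hp g₁ f).unique ?_
    simpa only [h'] using lp.hasSum_apply_single hp g₂ f
  calc #(StrongDual ℝ (lp (fun _ : ι => ℝ) p)) ≤ 𝔠 ^ #ι := by
        simpa [mk_arrow, mk_real] using mk_le_of_injective hinj
    _ ≤ 𝔠 ^ ℵ₀ := power_le_power_left continuum_ne_zero mk_le_aleph0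
    _ = 𝔠 := continuum_power_aleph0

end lp

lemma Submodule.exists_inner_ge_of_mem_topologicalClosure {H : Type*} [NormedAddCommGroup H]
    [InnerProductSpace ℝ H] {N : Submodule ℝ H} {b : H} (hb : b ∈ N.topologicalClosure) :
    ∃ g ∈ N, ‖g‖ ≤ 1 ∧ ‖b‖ / 2 ≤ inner ℝ g b := by
  rcases eq_or_ne b 0 with rfl | hb0
  · exact ⟨0, N.zero_mem, by simp, by simp⟩
  have hpos : 0 < ‖b‖ := norm_pos_iff.mpr hb0
  obtain ⟨b₀, hb₀N, hdist⟩ : ∃ b₀ ∈ N, dist b b₀ < ‖b‖ / 3 :=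
    Metric.mem_closure_iff.mp (N.topologicalClosure_coe ▸ hb) _ (by positivity)
  rw [dist_eq_norm] at hdist
  have hnorm : ‖b₀‖ ≤ 4 / 3 * ‖b‖ := by
    linarith [norm_le_norm_add_norm_sub' b₀ b, norm_sub_rev b b₀]
  have hinner : 2 / 3 * ‖b‖ ^ 2 ≤ inner ℝ b₀ b := by
    have h : inner ℝ b₀ b = ‖b‖ ^ 2 - inner ℝ (b - b₀) b := by
      rw [inner_sub_left, real_inner_self_eq_norm_sq]; ring
    have := real_inner_le_norm (b - b₀) b
    nlinarith
  refine ⟨(3 / (4 * ‖b‖)) • b₀, N.smul_mem _ hb₀N, ?_, ?_⟩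
  · rw [norm_smul, Real.norm_of_nonneg (by positivity), div_mul_eq_mul_div,
      div_le_one (by positivity)]
    linarith
  · rw [real_inner_smul_left, div_mul_eq_mul_div, le_div_iff₀ (by positivity)]
    nlinarith

section InnerSnd

variable {E H : Type*} [NormedAddCommGroup E] [NormedSpace ℝ E]
  [NormedAddCommGroup H] [InnerProductSpace ℝ H]

variable (E H) in
noncomputable def innerSnd : H →ₗ[ℝ] StrongDual ℝ (E × H) where
  toFun g := (innerSL ℝ g).comp (ContinuousLinearMap.snd ℝ E H)
  map_add' g g' := ContinuousLinearMap.ext fun z => by simp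
  map_smul' c g := ContinuousLinearMap.ext fun z => by simp

@[simp]
lemma innerSnd_apply (g : H) (z : E × H) : innerSnd E H g z = inner ℝ g z.2 := rfl

lemma norm_innerSnd_le (g : H) : ‖innerSnd E H g‖ ≤ ‖g‖ :=
  ContinuousLinearMap.opNorm_le_bound _ (norm_nonneg g) fun z =>
    calc ‖inner ℝ g z.2‖ ≤ ‖g‖ * ‖z.2‖ := norm_inner_le_norm g z.2
      _ ≤ ‖g‖ * ‖z‖ := mul_le_mul_of_nonneg_left (norm_snd_le z) (norm_nonneg g)

lemma mem_range_innerSnd [CompleteSpace H] {f : StrongDual ℝ (E × H)}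
    (hf : f.comp (ContinuousLinearMap.inl ℝ E H) = 0) : f ∈ LinearMap.range (innerSnd E H) := by
  refine ⟨(InnerProductSpace.toDual ℝ H).symm (f.comp (ContinuousLinearMap.inr ℝ E H)),
    ContinuousLinearMap.ext fun z => ?_⟩
  have hz : f (z.1, 0) = 0 := DFunLike.congr_fun hf z.1
  rw [innerSnd_apply, InnerProductSpace.toDual_symm_apply, ContinuousLinearMap.comp_apply,
    ContinuousLinearMap.inr_apply, ← zero_add (f (0, z.2)), ← hz, ← map_add]
  simp

end InnerSnd

lemma isNormingOver_prod_topologicalClosure_comap_innerSnd {E H : Type*} [NormedAddCommGroup E]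
    [NormedSpace ℝ E] [NormedAddCommGroup H] [InnerProductSpace ℝ H]
    (M : Submodule ℝ (StrongDual ℝ (E × H))) :
    IsNormingOver M ((⊥ : Submodule ℝ E).prod (M.comap (innerSnd E H)).topologicalClosure) := by
  refine ⟨1 / 2, by norm_num, fun x hx => ?_⟩
  obtain ⟨hx₁, hx₂⟩ := Submodule.mem_prod.mp hx
  obtain ⟨g, hgM, hg, hgx⟩ := Submodule.exists_inner_ge_of_mem_topologicalClosure hx₂
  have hx : ‖x‖ = ‖x.2‖ := by
    rw [Prod.norm_def, (Submodule.mem_bot ℝ).mp hx₁, norm_zero, max_eq_right (norm_nonneg _)]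
  calc 1 / 2 * ‖x‖ = ‖x.2‖ / 2 := by rw [hx]; ring
    _ ≤ innerSnd E H g x := hgx
    _ ≤ |innerSnd E H g x| := le_abs_self _
    _ ≤ dualSup M x := abs_apply_le_dualSup hgM ((norm_innerSnd_le g).trans hg) x

lemma not_finiteDimensional_comap_innerSnd {E H : Type u} [NormedAddCommGroup E]
    [NormedSpace ℝ E] [NormedAddCommGroup H] [InnerProductSpace ℝ H] [CompleteSpace H]
    (hE : #(StrongDual ℝ E) ≤ 𝔠) {M : Submodule ℝ (StrongDual ℝ (E × H))} (hM : 𝔠 < #M) :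
    ¬FiniteDimensional ℝ (M.comap (innerSnd E H)) := by
  intro hfin
  let φ := (ContinuousLinearMap.precomp ℝ (ContinuousLinearMap.inl ℝ E H)).toLinearMap ∘ₗ M.subtype
  refine φ.not_finiteDimensional_ker_of_continuum_lt hM hE ?_
  have hle : (LinearMap.ker φ).map M.subtype ≤ (M.comap (innerSnd E H)).map (innerSnd E H) := by
    rintro _ ⟨f, hf, rfl⟩
    obtain ⟨g, hg⟩ := mem_range_innerSnd (E := E) hf
    exact ⟨g, show innerSnd E H g ∈ M from hg ▸ f.2, hg⟩
  have := Submodule.finiteDimensional_of_le hle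
  exact Module.Finite.equiv (Submodule.equivMapOfInjective _ M.injective_subtype _).symm

theorem exists_isNormingOver_of_isTotalSub {E H : Type u} [NormedAddCommGroup E]
    [NormedSpace ℝ E] [NormedAddCommGroup H] [InnerProductSpace ℝ H] [CompleteSpace H]
    (hE : #(StrongDual ℝ E) ≤ 𝔠) (hX : 2 ^ 𝔠 < #(E × H))
    {M : Submodule ℝ (StrongDual ℝ (E × H))} (hM : IsTotalSub M) :
    ∃ L : Submodule ℝ (E × H), IsClosed (L : Set (E × H)) ∧ ¬FiniteDimensional ℝ L ∧
      IsNormingOver M L := by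
  set N := M.comap (innerSnd E H)
  have hN : ¬FiniteDimensional ℝ N :=
    not_finiteDimensional_comap_innerSnd hE (hM.continuum_lt_cardinal_mk hX)
  refine ⟨(⊥ : Submodule ℝ E).prod N.topologicalClosure, ?_, fun hfin => hN ?_,
    isNormingOver_prod_topologicalClosure_comap_innerSnd M⟩
  · exact isClosed_singleton.prod N.isClosed_topologicalClosure
  · refine Submodule.finiteDimensional_of_le (fun g hg => ?_ :
      N ≤ ((⊥ : Submodule ℝ E).prod N.topologicalClosure).map (LinearMap.snd ℝ E H))
    exact ⟨(0, g), ⟨rfl, N.le_topologicalClosure hg⟩, rfl⟩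

theorem stmt17 {Γ : Type} (hΓ : 2 ^ Cardinal.continuum < Cardinal.mk Γ) :
    (∀ M : Submodule ℝ (StrongDual ℝ ((lp (fun _ : ℕ => ℝ) 1) × (lp (fun _ : Γ => ℝ) 2))),
      IsTotalSub M →
        ∃ L : Submodule ℝ ((lp (fun _ : ℕ => ℝ) 1) × (lp (fun _ : Γ => ℝ) 2)),
          IsClosed (L : Set ((lp (fun _ : ℕ => ℝ) 1) × (lp (fun _ : Γ => ℝ) 2))) ∧
          ¬FiniteDimensional ℝ L ∧ IsNormingOver M L) ∧
    ¬∃ M : Submodule ℝ (StrongDual ℝ ((lp (fun _ : ℕ => ℝ) 1) × (lp (fun _ : Γ => ℝ) 2))),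
        IsTotalSub M ∧ NowhereNorming M := by
  have hE := lp.cardinal_mk_strongDual_le (ι := ℕ) (p := 1) ENNReal.one_ne_top
  have hX : 2 ^ 𝔠 < #(lp (fun _ : ℕ => ℝ) 1 × lp (fun _ : Γ => ℝ) 2) :=
    hΓ.trans_le ((lp.cardinal_mk_le Γ 2).trans (mk_le_of_surjective Prod.snd_surjective))
  have hnorming := fun M (hM : IsTotalSub M) => exists_isNormingOver_of_isTotalSub hE hX hM
  refine ⟨hnorming, ?_⟩
  rintro ⟨M, hM, hNN⟩
  obtain ⟨L, hL, hLfin, hML⟩ := hnorming M hM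
  exact hML.not_nowhereNorming hL hLfin hNN
end
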